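/- arXiv:2206.05043 — 2 statements merged into one kernel-verified Lean document; each statement's English description precedes it below -/
import Mathlib

section
/- There exists a constant K > 0 such that for every n ≥ 2 and every probability mass function p on Fin n, if g : Fin n → Fin n is a random p-mapping (the values g(i) chosen independently according to p for each i), then the probability that g has more than 2·√(n · log n) cyclic points, or that g has height greater than 2·√(n · log n), is at most K/n. -/
/-!
Put `m = ⌊2√(n log n)⌋`. If `g` has height `> m`, it has an injective path
`t₀ ↦ t₁ ↦ ⋯ ↦ tₘ`; if it has more than `m` cyclic points, it permutes its set of cyclic points,
a set of some size `k > m`. A union bound over paths, and over `k`-sets together with a permutation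
of them, bounds both probabilities by `n · m! eₘ(p)`, because `k! e_k(p)` is nonincreasing in `k`;
here `e_k` is the `k`-th elementary symmetric polynomial in the probabilities `p i`.
The identity `(k + 1) e_{k+1} = ∑ᵢ pᵢ e_k(p without i)` and Chebyshev's sum inequality give
`(k + 1) e_{k+1} ≤ (1 - k/n) e_k`, hence `m! eₘ ≤ exp (-m(m-1)/2n) ≤ e³/n²`.
-/

def IsCyclicPt {Q : Type*} (f : Q → Q) (s : Q) : Prop :=
  ∃ i : ℕ, 0 < i ∧ f^[i] s = s

noncomputable def stateHeight {Q : Type*} (f : Q → Q) (T : Q) : ℕ :=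
  sInf {i : ℕ | IsCyclicPt f (f^[i] T)}

noncomputable def funcHeight {Q : Type*} [Fintype Q] (f : Q → Q) : ℕ :=
  Finset.univ.sup (stateHeight f)

open Finset Function

namespace RandomMapping

open scoped Nat

section Esymm

variable {ι R : Type*}

/-- Equal to `(s.val.map p).esymm k` (`Finset.esymm_map_val`); indexing the weights by `s`
lets us insert and erase indices. -/
def esymm [CommSemiring R] (p : ι → R) (s : Finset ι) (k : ℕ) : R :=
  ∑ B ∈ s.powersetCard k, ∏ b ∈ B, p b

section CommSemiring

variable [CommSemiring R] (p : ι → R)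

@[simp]
theorem esymm_zero (s : Finset ι) : esymm p s 0 = 1 := by
  simp [esymm]

variable [DecidableEq ι]

theorem esymm_insert {s : Finset ι} {j : ι} (hj : j ∉ s) (k : ℕ) :
    esymm p (insert j s) (k + 1) = esymm p s (k + 1) + p j * esymm p s k := by
  simp only [esymm, ← Finset.esymm_map_val, insert_val_of_notMem hj, Multiset.map_cons]
  simp [Multiset.esymm, Multiset.powersetCard_cons, Multiset.map_map,
    Multiset.prod_cons, Multiset.sum_map_mul_left]

theorem esymm_eq_of_mem {s : Finset ι} {i : ι} (hi : i ∈ s) (k : ℕ) :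
    esymm p s (k + 1) = esymm p (s.erase i) (k + 1) + p i * esymm p (s.erase i) k := by
  rw [← esymm_insert p (notMem_erase i s), insert_erase hi]

theorem succ_mul_esymm_succ (s : Finset ι) (k : ℕ) :
    (k + 1) * esymm p s (k + 1) = ∑ i ∈ s, p i * esymm p (s.erase i) k := by
  induction s using Finset.induction_on generalizing k with
  | empty => rw [esymm, powersetCard_eq_empty.2 (by simp), sum_empty, mul_zero, sum_empty]
  | insert j t hj ih =>
    have herase : ∀ i ∈ t, (insert j t).erase i = insert j (t.erase i) := fun i hi =>
      erase_insert_of_ne (ne_of_mem_of_not_mem hi hj).symm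
    rw [sum_insert hj, erase_insert hj, esymm_insert p hj, sum_congr rfl fun i hi => by
      rw [herase i hi]]
    cases k with
    | zero =>
      have h := ih 0
      simp only [esymm_zero, mul_one, Nat.cast_zero, zero_add, one_mul] at h ⊢
      rw [h, add_comm]
    | succ k =>
      rw [sum_congr rfl fun i hi => by
        rw [esymm_insert p fun h => hj (mem_of_mem_erase h)]]
      simp only [mul_add, sum_add_distrib, ← ih, mul_left_comm _ (p j), ← mul_sum]
      push_cast
      ring

theorem card_filter_injective_image_eq [Fintype ι] {B : Finset ι} {k : ℕ} (hB : #B = k) :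
    #{u : Fin k → ι | Injective u ∧ univ.image u = B} = k ! := by
  have himage : ({u : Fin k → ι | Injective u ∧ univ.image u = B} : Finset _) =
      (univ : Finset (Fin k ↪ B)).image fun e i => (e i : ι) := by
    ext u
    simp only [mem_filter, mem_univ, true_and, mem_image]
    constructor
    · rintro ⟨hu, rfl⟩
      exact ⟨⟨fun i => ⟨u i, mem_image_of_mem u (mem_univ i)⟩,
        fun i j h => hu (congrArg Subtype.val h)⟩, rfl⟩
    · rintro ⟨e, rfl⟩
      have hinj : Injective fun i => (e i : ι) := Subtype.val_injective.comp e.injective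
      refine ⟨hinj, eq_of_subset_of_card_le (fun b hb => ?_) ?_⟩
      · obtain ⟨i, -, rfl⟩ := mem_image.1 hb
        exact (e i).2
      · rw [card_image_of_injective _ hinj, hB, card_univ, Fintype.card_fin]
  rw [himage, card_image_of_injective, card_univ, Fintype.card_embedding_eq, Fintype.card_coe,
    hB, Fintype.card_fin, Nat.descFactorial_self]
  intro e e' h
  ext i
  exact congrFun h i

theorem sum_injective_prod_eq [Fintype ι] (k : ℕ) :
    ∑ u : Fin k → ι with Injective u, ∏ i, p (u i) = k ! * esymm p univ k := by
  have hmaps : ∀ u ∈ ({u : Fin k → ι | Injective u} : Finset _),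
      univ.image u ∈ powersetCard k univ := fun u hu =>
    mem_powersetCard.2 ⟨subset_univ _, by
      rw [card_image_of_injective _ (mem_filter.1 hu).2, card_univ, Fintype.card_fin]⟩
  rw [← sum_fiberwise_of_maps_to hmaps, esymm, mul_sum]
  refine sum_congr rfl fun B hB => ?_
  have hfiber : ∀ u ∈ ({u : Fin k → ι | Injective u ∧ univ.image u = B} : Finset _),
      ∏ i, p (u i) = ∏ b ∈ B, p b := by
    intro u hu
    obtain ⟨hinj, rfl⟩ := (mem_filter.1 hu).2
    exact (prod_image fun i _ j _ h => hinj h).symm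
  rw [filter_filter, sum_congr rfl hfiber, sum_const,
    card_filter_injective_image_eq (mem_powersetCard.1 hB).2, nsmul_eq_mul]

end CommSemiring

theorem esymm_nonneg {p : ι → ℝ} (hp0 : ∀ i, 0 ≤ p i) (s : Finset ι) (k : ℕ) :
    0 ≤ esymm p s k :=
  sum_nonneg fun _ _ => prod_nonneg fun b _ => hp0 b

section ProbabilityVector

variable [DecidableEq ι] {p : ι → ℝ}

theorem monovaryOn_mul_esymm_erase (hp0 : ∀ i, 0 ≤ p i) (s : Finset ι) (k : ℕ) :
    MonovaryOn p (fun i => p i * esymm p (s.erase i) k) s := by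
  intro i hi j hj hlt
  dsimp only at hlt ⊢
  by_contra! hji
  refine hlt.not_ge ?_
  cases k with
  | zero => simpa using hji.le
  | succ k =>
    have hij : i ≠ j := by
      rintro rfl
      exact lt_irrefl _ hji
    rw [esymm_eq_of_mem p (mem_erase.2 ⟨hij.symm, hj⟩), esymm_eq_of_mem p (mem_erase.2 ⟨hij, hi⟩),
      erase_right_comm]
    have h₁ := esymm_nonneg hp0 ((s.erase i).erase j) (k + 1)
    nlinarith [mul_nonneg (sub_nonneg.2 hji.le) h₁]

variable [Fintype ι]

omit [DecidableEq ι] in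
theorem card_pos_of_sum_eq_one (hp1 : ∑ i, p i = 1) : 0 < Fintype.card ι :=
  Fintype.card_pos_iff.2 <| univ_nonempty_iff.1 <| nonempty_of_sum_ne_zero <| by
    rw [hp1]; exact one_ne_zero

theorem succ_mul_esymm_succ_le (hp0 : ∀ i, 0 ≤ p i) (hp1 : ∑ i, p i = 1) (k : ℕ) :
    (k + 1) * esymm p univ (k + 1) ≤ (1 - k / Fintype.card ι) * esymm p univ k := by
  rw [succ_mul_esymm_succ]
  cases k with
  | zero => simp [hp1]
  | succ k =>
    have hn : (0 : ℝ) < Fintype.card ι := by exact_mod_cast card_pos_of_sum_eq_one hp1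
    have hdecomp : ∑ i, p i * esymm p (univ.erase i) (k + 1) =
        esymm p univ (k + 1) - ∑ i, p i * (p i * esymm p (univ.erase i) k) := by
      calc ∑ i, p i * esymm p (univ.erase i) (k + 1)
          = ∑ i, (p i * esymm p univ (k + 1) - p i * (p i * esymm p (univ.erase i) k)) :=
            sum_congr rfl fun i _ => by rw [esymm_eq_of_mem p (mem_univ i)]; ring
        _ = _ := by rw [sum_sub_distrib, ← sum_mul, hp1, one_mul]
    have hcheb := (monovaryOn_mul_esymm_erase hp0 univ k).sum_mul_sum_le_card_mul_sum
    rw [hp1, one_mul, ← succ_mul_esymm_succ, card_univ] at hcheb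
    rw [hdecomp, sub_mul, one_mul, div_mul_eq_mul_div, sub_le_sub_iff_left, div_le_iff₀ hn]
    push_cast
    linarith

theorem factorial_mul_esymm_antitone (hp0 : ∀ i, 0 ≤ p i) (hp1 : ∑ i, p i = 1) :
    Antitone fun k => (k ! : ℝ) * esymm p univ k := by
  refine antitone_nat_of_succ_le fun k => ?_
  have hshrink : (1 - k / Fintype.card ι : ℝ) * esymm p univ k ≤ esymm p univ k :=
    mul_le_of_le_one_left (esymm_nonneg hp0 _ _) (sub_le_self _ (by positivity))
  calc ((k + 1) ! : ℝ) * esymm p univ (k + 1) = k ! * ((k + 1) * esymm p univ (k + 1)) := by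
        push_cast [Nat.factorial_succ]; ring
    _ ≤ k ! * esymm p univ k :=
        mul_le_mul_of_nonneg_left ((succ_mul_esymm_succ_le hp0 hp1 k).trans hshrink)
          (by positivity)

theorem factorial_mul_esymm_le_exp (hp0 : ∀ i, 0 ≤ p i) (hp1 : ∑ i, p i = 1) (k : ℕ) :
    k ! * esymm p univ k ≤ Real.exp (-(k * (k - 1) / (2 * Fintype.card ι))) := by
  have hn : (0 : ℝ) < Fintype.card ι := by exact_mod_cast card_pos_of_sum_eq_one hp1
  induction k with
  | zero => simp
  | succ k ih =>
    calc ((k + 1) ! : ℝ) * esymm p univ (k + 1) = k ! * ((k + 1) * esymm p univ (k + 1)) := by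
          push_cast [Nat.factorial_succ]; ring
      _ ≤ k ! * ((1 - k / Fintype.card ι) * esymm p univ k) :=
          mul_le_mul_of_nonneg_left (succ_mul_esymm_succ_le hp0 hp1 k) (by positivity)
      _ ≤ k ! * (Real.exp (-(k / Fintype.card ι)) * esymm p univ k) := by
          have := esymm_nonneg hp0 univ k
          gcongr
          exact Real.one_sub_le_exp_neg _
      _ = Real.exp (-(k / Fintype.card ι)) * (k ! * esymm p univ k) := by ring
      _ ≤ Real.exp (-(k / Fintype.card ι)) *
            Real.exp (-(k * (k - 1) / (2 * Fintype.card ι))) := by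
          gcongr
      _ = Real.exp (-((k + 1 : ℕ) * ((k + 1 : ℕ) - 1) / (2 * Fintype.card ι))) := by
          rw [← Real.exp_add]
          congr 1
          push_cast
          field_simp
          ring

end ProbabilityVector

end Esymm

section UnionBound

variable {β γ : Type*} {f : β → ℝ}

theorem sum_filter_le_sum_sum_filter (hf : ∀ x, 0 ≤ f x) (s : Finset β) (W : Finset γ)
    {P : β → Prop} {Q : γ → β → Prop} [DecidablePred P] [∀ w, DecidablePred (Q w)]
    (h : ∀ x, P x → ∃ w ∈ W, Q w x) :
    ∑ x ∈ s with P x, f x ≤ ∑ w ∈ W, ∑ x ∈ s with Q w x, f x := by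
  simp_rw [sum_filter]
  rw [sum_comm]
  have hterm : ∀ x w, 0 ≤ if Q w x then f x else 0 := fun x w => by
    split_ifs
    exacts [hf x, le_rfl]
  refine sum_le_sum fun x _ => ?_
  split_ifs with hx
  · obtain ⟨w, hw, hq⟩ := h x hx
    calc f x = if Q w x then f x else 0 := (if_pos hq).symm
      _ ≤ _ := single_le_sum (fun w _ => hterm x w) hw
  · exact sum_nonneg fun w _ => hterm x w

theorem sum_filter_or_le [DecidableEq β] (hf : ∀ x, 0 ≤ f x) (s : Finset β) (P Q : β → Prop)
    [DecidablePred P] [DecidablePred Q] :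
    ∑ x ∈ s with P x ∨ Q x, f x ≤ ∑ x ∈ s with P x, f x + ∑ x ∈ s with Q x, f x := by
  rw [filter_or, ← sum_union_inter]
  exact le_add_of_nonneg_right (sum_nonneg fun x _ => hf x)

end UnionBound

section Dynamics

variable {α : Type*} {f : α → α}

theorem injOn_iterate_of_iterate_notMem_periodicPts {x : α} {k : ℕ}
    (hx : f^[k] x ∉ periodicPts f) : Set.InjOn (fun i => f^[i] x) (Set.Iic k) := by
  have hne : ∀ a b, a < b → b ≤ k → f^[a] x ≠ f^[b] x := by
    intro a b hab hbk heq
    have hper : IsPeriodicPt f (b - a) (f^[a] x) := by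
      rw [IsPeriodicPt, IsFixedPt, ← iterate_add_apply, Nat.sub_add_cancel hab.le, heq]
    refine hx (mk_mem_periodicPts (Nat.sub_pos_of_lt hab) ?_)
    simpa [← iterate_add_apply, Nat.sub_add_cancel (hab.le.trans hbk)] using
      hper.apply_iterate (k - a)
  intro a ha b hb h
  rcases lt_trichotomy a b with hab | rfl | hab
  · exact absurd h (hne a b hab hb)
  · rfl
  · exact absurd h.symm (hne b a hab ha)

theorem exists_injective_path_of_lt_funcHeight [Fintype α] {k : ℕ} (h : k < funcHeight f) :
    ∃ t : Fin (k + 1) → α, Injective t ∧ ∀ i : Fin k, f (t i.castSucc) = t i.succ := by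
  obtain ⟨x, -, hx⟩ := Finset.lt_sup_iff.1 h
  have hnot : f^[k] x ∉ periodicPts f := fun hper =>
    (Nat.sInf_le hper : stateHeight f x ≤ k).not_gt hx
  refine ⟨fun i => f^[i] x, fun i j hij => Fin.ext ?_, fun i => (iterate_succ_apply' f i x).symm⟩
  exact injOn_iterate_of_iterate_notMem_periodicPts hnot (Nat.lt_succ_iff.1 i.2)
    (Nat.lt_succ_iff.1 j.2) hij

end Dynamics

section PMapping

variable {α β : Type*} [Fintype α] [DecidableEq α] [Fintype β] [DecidableEq β]

theorem sum_prod_filter_apply_eq {κ : Type*} [Fintype κ] {p : β → ℝ} (hp1 : ∑ b, p b = 1)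
    {t : κ → α} (ht : Injective t) (v : κ → β)
    [DecidablePred fun g : α → β => ∀ i, g (t i) = v i] :
    ∑ g : α → β with ∀ i, g (t i) = v i, ∏ a, p (g a) = ∏ i, p (v i) := by
  rw [sum_congr (s₂ := Fintype.piFinset fun a => {b | ∀ i, t i = a → b = v i}) ?_ fun _ _ => rfl,
    ← prod_univ_sum]
  swap
  · ext g
    simp only [mem_filter, mem_univ, true_and, Fintype.mem_piFinset]
    exact ⟨fun h a i hi => hi ▸ h i, fun h i => h (t i) i rfl⟩
  refine (Fintype.prod_of_injective t ht _ _ (fun a ha => ?_) fun i => ?_).symm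
  · rw [filter_true_of_mem fun b _ i hi => (ha ⟨i, hi⟩).elim, hp1]
  · have hsingle : ({b | ∀ j, t j = t i → b = v j} : Finset β) = {v i} := by
      ext b
      simp [ht.eq_iff]
    rw [hsingle, sum_singleton]

variable {p : α → ℝ}

theorem sum_prod_filter_bijOn_le (hp0 : ∀ a, 0 ≤ p a) (hp1 : ∑ a, p a = 1) (A : Finset α) :
    ∑ g : α → α with Set.BijOn g A A, ∏ a, p (g a) ≤ (#A)! * ∏ a ∈ A, p a := by
  calc ∑ g : α → α with Set.BijOn g A A, ∏ a, p (g a)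
      ≤ ∑ σ : Equiv.Perm A, ∑ g : α → α with ∀ a : A, g a = (σ a : α),
          ∏ a, p (g a) :=
        sum_filter_le_sum_sum_filter (fun g => prod_nonneg fun a _ => hp0 (g a)) _ _
          fun g hg => ⟨(hg.equiv g : Equiv.Perm A), mem_univ _, fun a => rfl⟩
    _ = ∑ σ : Equiv.Perm A, ∏ a : A, p (σ a) :=
        sum_congr rfl fun σ _ =>
          sum_prod_filter_apply_eq hp1 Subtype.val_injective fun a => (σ a : α)
    _ = (#A)! * ∏ a ∈ A, p a := by
        simp_rw [Equiv.prod_comp _ fun a : A => p a]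
        rw [sum_const, card_univ, Fintype.card_perm, Fintype.card_coe, nsmul_eq_mul,
          prod_coe_sort]

theorem sum_prod_filter_exists_bijOn_le (hp0 : ∀ a, 0 ≤ p a) (hp1 : ∑ a, p a = 1) (k : ℕ) :
    ∑ g : α → α with ∃ A : Finset α, #A = k ∧ Set.BijOn g A A, ∏ a, p (g a) ≤
      k ! * esymm p univ k := by
  calc ∑ g : α → α with ∃ A : Finset α, #A = k ∧ Set.BijOn g A A, ∏ a, p (g a)
      ≤ ∑ A ∈ powersetCard k (univ : Finset α), ∑ g : α → α with Set.BijOn g A A, ∏ a, p (g a) :=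
        sum_filter_le_sum_sum_filter (fun g => prod_nonneg fun a _ => hp0 (g a)) _ _
          fun g ⟨A, hA, hg⟩ => ⟨A, mem_powersetCard.2 ⟨subset_univ A, hA⟩, hg⟩
    _ ≤ ∑ A ∈ powersetCard k univ, (#A)! * ∏ a ∈ A, p a :=
        sum_le_sum fun A _ => sum_prod_filter_bijOn_le hp0 hp1 A
    _ = k ! * esymm p univ k := by
        rw [esymm, mul_sum]
        exact sum_congr rfl fun A hA => by rw [(mem_powersetCard.1 hA).2]

theorem sum_prod_filter_lt_ncard_periodicPts_le (hp0 : ∀ a, 0 ≤ p a) (hp1 : ∑ a, p a = 1)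
    (m : ℕ) :
    ∑ g : α → α with m < (periodicPts g).ncard, ∏ a, p (g a) ≤
      Fintype.card α * (m ! * esymm p univ m) := by
  classical
  calc ∑ g : α → α with m < (periodicPts g).ncard, ∏ a, p (g a)
      ≤ ∑ k ∈ Ioc m (Fintype.card α),
          ∑ g : α → α with ∃ A : Finset α, #A = k ∧ Set.BijOn g A A, ∏ a, p (g a) := by
        refine sum_filter_le_sum_sum_filter (fun g => prod_nonneg fun a _ => hp0 (g a)) _ _
          fun g hg => ⟨#(periodicPts g).toFinset, ?_, (periodicPts g).toFinset, rfl, ?_⟩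
        · rw [← Set.ncard_eq_toFinset_card']
          exact mem_Ioc.2 ⟨hg, (Set.ncard_eq_toFinset_card' _).trans_le (card_le_univ _)⟩
        · rw [Set.coe_toFinset]
          exact bijOn_periodicPts g
    _ ≤ ∑ k ∈ Ioc m (Fintype.card α), (m ! * esymm p univ m) :=
        sum_le_sum fun k hk => (sum_prod_filter_exists_bijOn_le hp0 hp1 k).trans
          (factorial_mul_esymm_antitone hp0 hp1 (mem_Ioc.1 hk).1.le)
    _ ≤ Fintype.card α * (m ! * esymm p univ m) := by
        rw [sum_const, Nat.card_Ioc, nsmul_eq_mul]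
        have := esymm_nonneg hp0 univ m
        gcongr
        exact_mod_cast Nat.sub_le _ _

theorem sum_injective_prod_succ_le (hp0 : ∀ a, 0 ≤ p a) (m : ℕ) :
    ∑ t : Fin (m + 1) → α with Injective t, ∏ i : Fin m, p (t i.succ) ≤
      Fintype.card α * ∑ u : Fin m → α with Injective u, ∏ i, p (u i) := by
  calc ∑ t : Fin (m + 1) → α with Injective t, ∏ i : Fin m, p (t i.succ)
      ≤ ∑ t : Fin (m + 1) → α with Injective (Fin.tail t), ∏ i, p (Fin.tail t i) :=
        sum_le_sum_of_subset_of_nonneg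
          (monotone_filter_right _ fun t _ ht => ht.comp (Fin.succ_injective m))
          fun t _ _ => prod_nonneg fun i _ => hp0 _
    _ = ∑ x : α × (Fin m → α), if Injective x.2 then ∏ i, p (x.2 i) else 0 := by
        rw [sum_filter]
        exact (Fintype.sum_equiv (Fin.consEquiv fun _ => α) _ _ fun x => by
          simp [Fin.consEquiv]).symm
    _ = _ := by simp only [Fintype.sum_prod_type, sum_const, card_univ, nsmul_eq_mul, sum_filter]

theorem sum_prod_filter_exists_path_le (hp0 : ∀ a, 0 ≤ p a) (hp1 : ∑ a, p a = 1) (m : ℕ) :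
    ∑ g : α → α with ∃ t : Fin (m + 1) → α, Injective t ∧
        ∀ i : Fin m, g (t i.castSucc) = t i.succ, ∏ a, p (g a) ≤
      Fintype.card α * (m ! * esymm p univ m) := by
  calc ∑ g : α → α with ∃ t : Fin (m + 1) → α, Injective t ∧
        ∀ i : Fin m, g (t i.castSucc) = t i.succ, ∏ a, p (g a)
      ≤ ∑ t : Fin (m + 1) → α with Injective t,
          ∑ g : α → α with ∀ i : Fin m, g (t i.castSucc) = t i.succ, ∏ a, p (g a) :=
        sum_filter_le_sum_sum_filter (fun g => prod_nonneg fun a _ => hp0 (g a)) _ _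
          fun g ⟨t, ht, hg⟩ => ⟨t, mem_filter.2 ⟨mem_univ t, ht⟩, hg⟩
    _ = ∑ t : Fin (m + 1) → α with Injective t, ∏ i : Fin m, p (t i.succ) :=
        sum_congr rfl fun t ht => by
          -- the two filters differ only in their decidability instances
          convert sum_prod_filter_apply_eq (t := fun i : Fin m => t i.castSucc) hp1
            ((mem_filter.1 ht).2.comp (Fin.castSucc_injective m)) fun i => t i.succ
    _ ≤ Fintype.card α * (m ! * esymm p univ m) := by
        rw [← sum_injective_prod_eq]
        exact sum_injective_prod_succ_le hp0 m

theorem sum_prod_filter_lt_ncard_periodicPts_or_lt_funcHeight_le (hp0 : ∀ a, 0 ≤ p a)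
    (hp1 : ∑ a, p a = 1) (m : ℕ) :
    ∑ g : α → α with m < (periodicPts g).ncard ∨ m < funcHeight g, ∏ a, p (g a) ≤
      2 * Fintype.card α * (m ! * esymm p univ m) := by
  have hw : ∀ g : α → α, 0 ≤ ∏ a, p (g a) := fun g => prod_nonneg fun a _ => hp0 (g a)
  have htall : ∑ g : α → α with m < funcHeight g, ∏ a, p (g a) ≤
      Fintype.card α * (m ! * esymm p univ m) :=
    (sum_le_sum_of_subset_of_nonneg
      (monotone_filter_right _ fun g _ hg => exists_injective_path_of_lt_funcHeight hg)
      fun g _ _ => hw g).trans (sum_prod_filter_exists_path_le hp0 hp1 m)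
  linarith [sum_filter_or_le hw univ (fun g : α → α => m < (periodicPts g).ncard)
    (fun g => m < funcHeight g), sum_prod_filter_lt_ncard_periodicPts_le hp0 hp1 m]

end PMapping

section Numerics

open Real

theorem sq_sub_three_mul_le_floor_mul {x : ℝ} (hx : 0 ≤ x) :
    x ^ 2 - 3 * x ≤ ⌊x⌋₊ * (⌊x⌋₊ - 1 : ℝ) := by
  have hle := Nat.floor_le hx
  have hlt := Nat.lt_floor_add_one x
  nlinarith [mul_nonneg (Nat.cast_nonneg ⌊x⌋₊ : (0 : ℝ) ≤ ⌊x⌋₊)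
      (by linarith : (0 : ℝ) ≤ ⌊x⌋₊ + 1 - x),
    mul_nonneg (by linarith : (0 : ℝ) ≤ x - ⌊x⌋₊) (by linarith : (0 : ℝ) ≤ 3 - x + ⌊x⌋₊)]

theorem exp_neg_floor_mul_le {n : ℕ} (hn : 0 < n) {x : ℝ} (hx : x = 2 * √(n * log n)) :
    exp (-(⌊x⌋₊ * (⌊x⌋₊ - 1 : ℝ) / (2 * n))) ≤ exp 3 / n ^ 2 := by
  have hn0 : (0 : ℝ) < n := by exact_mod_cast hn
  have hlog : 0 ≤ log n := log_nonneg (by exact_mod_cast hn)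
  have hx0 : 0 ≤ x := hx ▸ by positivity
  have hx2 : x ^ 2 = 4 * (n * log n) := by
    rw [hx, mul_pow, sq_sqrt (by positivity)]
    norm_num
  have hxn : x ≤ 2 * n := by
    have h := sqrt_le_sqrt (mul_le_mul_of_nonneg_left (log_le_self hn0.le) hn0.le)
    rw [sqrt_mul_self hn0.le] at h
    linarith
  have hfloor := sq_sub_three_mul_le_floor_mul hx0
  calc exp (-(⌊x⌋₊ * (⌊x⌋₊ - 1 : ℝ) / (2 * n))) ≤ exp (3 - 2 * log n) := by
        gcongr
        rw [neg_le_sub_iff_le_add, ← sub_le_iff_le_add', le_div_iff₀ (by positivity)]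
        nlinarith
    _ = exp 3 / n ^ 2 := by
        rw [exp_sub, show 2 * log n = log ((n : ℝ) ^ 2) by rw [log_pow]; norm_num,
          exp_log (by positivity)]

end Numerics

end RandomMapping

open Classical in
/-- There is a constant `K > 0` such that for every `n ≥ 2` and every probability
mass function `p` on `Fin n`, a random `p`-mapping `g : Fin n → Fin n` (whose values
`g i` are chosen independently with distribution `p`, so that the probability of any
outcome `g` is `∏ i, p (g i)`) has more than `2√(n log n)` cyclic points or has
height greater than `2√(n log n)` with probability at most `K / n`. -/
theorem random_p_mapping_cyclic_points_and_height :
    ∃ K : ℝ, 0 < K ∧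
      ∀ n : ℕ, 2 ≤ n → ∀ p : Fin n → ℝ, (∀ i, 0 ≤ p i) → (∑ i, p i) = 1 →
        ∑ g ∈ Finset.univ.filter (fun g : Fin n → Fin n =>
            2 * Real.sqrt (n * Real.log n) < ({s : Fin n | IsCyclicPt g s}.ncard : ℝ) ∨
            2 * Real.sqrt (n * Real.log n) < (funcHeight g : ℝ)),
          ∏ i, p (g i) ≤ K / n := by
  refine ⟨2 * Real.exp 3, by positivity, fun n hn p hp0 hp1 => ?_⟩
  set x := 2 * Real.sqrt (n * Real.log n) with hx
  have hx0 : 0 ≤ x := by positivity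
  have hevent : ∀ g : Fin n → Fin n,
      x < ({s : Fin n | IsCyclicPt g s}.ncard : ℝ) ∨ x < (funcHeight g : ℝ) ↔
        ⌊x⌋₊ < (periodicPts g).ncard ∨ ⌊x⌋₊ < funcHeight g := fun g => by
    rw [Nat.floor_lt hx0, Nat.floor_lt hx0]
    rfl
  rw [filter_congr fun g _ => hevent g]
  calc _ ≤ 2 * n * (Nat.factorial ⌊x⌋₊ * RandomMapping.esymm p univ ⌊x⌋₊) := by
        simpa using RandomMapping.sum_prod_filter_lt_ncard_periodicPts_or_lt_funcHeight_le
          hp0 hp1 ⌊x⌋₊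
    _ ≤ 2 * n * (Real.exp 3 / n ^ 2) := by
        have h := RandomMapping.factorial_mul_esymm_le_exp hp0 hp1 ⌊x⌋₊
        rw [Fintype.card_fin] at h
        gcongr
        exact h.trans (RandomMapping.exp_neg_floor_mul_le (by omega) hx)
    _ = 2 * Real.exp 3 / n := by
        field_simp
end

section
/- Let Q be a finite set with |Q| = n ≥ 2, and let a, b, c : Q → Q be functions with b and c bijective. Let h, m, L be natural numbers with m ≥ 1, and suppose: (i) the image of the h-fold iterate a^[h] has cardinality at most m; (ii) there exist distinct states P₁, P₂ ∈ Q with a(P₁) = a(P₂); (iii) for every ordered pair (S₁, S₂) of distinct states of Q there exists a word w over the two letters b, c of length at most L whose action maps S₁ to P₁ and S₂ to P₂. Then the automaton on state set Q with alphabet {a, b, c} is synchronizing, and it has a synchronizing word of length at most h + (m − 1)·(L + 1). -/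
/-- The action of a word (a list of letters, each acting as a function on the
state set), applied in order: the first letter of the list acts first. -/
def wordAction {Q : Type*} (w : List (Q → Q)) (q : Q) : Q :=
  w.foldl (fun s f => f s) q

/-- A word is synchronizing if its action sends every state to one common state. -/
def IsSyncWord {Q : Type*} (w : List (Q → Q)) : Prop :=
  ∃ S : Q, ∀ T : Q, wordAction w T = S

/-!
Greedy synchronization: `a^[h]` leaves at most `m` states reachable. As long as two distinct
states `S₁ ≠ S₂` remain reachable, a word over `b, c` of length at most `L` moves them onto
the pair `(P₁, P₂)`, and the letter `a` then merges them, so every block of at most `L + 1`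
letters loses one reachable state. After `m - 1` blocks a single state remains.
-/

lemma Set.ncard_image_lt_of_ne_of_map_eq {α β : Type*} {s : Set α} (hs : s.Finite)
    {f : α → β} {x y : α} (hx : x ∈ s) (hy : y ∈ s) (hxy : x ≠ y) (hf : f x = f y) :
    (f '' s).ncard < s.ncard :=
  (Set.ncard_image_le hs).lt_of_ne fun h => hxy ((Set.ncard_image_iff hs).mp h hx hy hf)

section

variable {Q : Type*}

lemma wordAction_append (w₁ w₂ : List (Q → Q)) (q : Q) :
    wordAction (w₁ ++ w₂) q = wordAction w₂ (wordAction w₁ q) :=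
  List.foldl_append

lemma wordAction_replicate (f : Q → Q) (h : ℕ) : wordAction (List.replicate h f) = f^[h] := by
  funext q
  induction h generalizing q with
  | zero => rfl
  | succ k ih => exact ih (f q)

lemma range_wordAction_append (w₁ w₂ : List (Q → Q)) :
    Set.range (wordAction (w₁ ++ w₂)) = wordAction w₂ '' Set.range (wordAction w₁) := by
  rw [← Set.range_comp]
  exact congrArg Set.range (funext (wordAction_append w₁ w₂))

lemma isSyncWord_of_ncard_range_le_one [Finite Q] [Nonempty Q] {w : List (Q → Q)}
    (hw : (Set.range (wordAction w)).ncard ≤ 1) : IsSyncWord w := by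
  obtain ⟨q⟩ := ‹Nonempty Q›
  exact ⟨wordAction w q, fun T => (Set.ncard_le_one (Set.toFinite _)).mp hw _ ⟨T, rfl⟩ _ ⟨q, rfl⟩⟩

theorem exists_isSyncWord_of_pairwise_mergeable [Finite Q] [Nonempty Q] {A : Set (Q → Q)}
    {ℓ : ℕ} (hmerge : ∀ S₁ S₂ : Q, S₁ ≠ S₂ → ∃ u : List (Q → Q), (∀ f ∈ u, f ∈ A) ∧
      u.length ≤ ℓ ∧ wordAction u S₁ = wordAction u S₂)
    (k : ℕ) {w : List (Q → Q)} (hw : ∀ f ∈ w, f ∈ A)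
    (hrange : (Set.range (wordAction w)).ncard ≤ k + 1) :
    ∃ w' : List (Q → Q), (∀ f ∈ w', f ∈ A) ∧ w'.length ≤ w.length + k * ℓ ∧ IsSyncWord w' := by
  induction k generalizing w with
  | zero =>
    exact ⟨w, hw, by simp, isSyncWord_of_ncard_range_le_one hrange⟩
  | succ k ih =>
    by_cases hsmall : (Set.range (wordAction w)).ncard ≤ k + 1
    · obtain ⟨w', hw', hlen, hsync⟩ := ih hw hsmall
      exact ⟨w', hw', hlen.trans (by gcongr; omega), hsync⟩
    obtain ⟨S₁, S₂, ⟨q₁, rfl⟩, ⟨q₂, rfl⟩, hne⟩ :=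
      (Set.one_lt_ncard_iff (Set.toFinite _)).mp (by omega : 1 < (Set.range (wordAction w)).ncard)
    obtain ⟨u, hu, hulen, hmerged⟩ := hmerge _ _ hne
    have hshrink : (Set.range (wordAction (w ++ u))).ncard ≤ k + 1 := by
      rw [range_wordAction_append]
      have := Set.ncard_image_lt_of_ne_of_map_eq (Set.toFinite _)
        (Set.mem_range_self q₁) (Set.mem_range_self q₂) hne hmerged
      omega
    have hwu : ∀ f ∈ w ++ u, f ∈ A := by
      simpa only [List.mem_append, or_imp, forall_and] using ⟨hw, hu⟩
    obtain ⟨w', hw', hlen, hsync⟩ := ih hwu hshrink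
    refine ⟨w', hw', ?_, hsync⟩
    rw [List.length_append] at hlen
    linarith [add_one_mul k ℓ]

end

theorem synchronization_from_merging_pair_general
    (Q : Type*) [Fintype Q]
    (a b c : Q → Q)
    (h m L : ℕ)
    (himg : (Set.range (a^[h])).ncard ≤ m)
    (hpair : ∃ P₁ P₂ : Q, P₁ ≠ P₂ ∧ a P₁ = a P₂ ∧
      ∀ S₁ S₂ : Q, S₁ ≠ S₂ →
        ∃ w : List (Q → Q), (∀ f ∈ w, f = b ∨ f = c) ∧ w.length ≤ L ∧
          wordAction w S₁ = P₁ ∧ wordAction w S₂ = P₂) :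
    ∃ w : List (Q → Q), (∀ f ∈ w, f = a ∨ f = b ∨ f = c) ∧
      w.length ≤ h + (m - 1) * (L + 1) ∧ IsSyncWord w := by
  obtain ⟨P₁, P₂, -, ha, hmove⟩ := hpair
  have : Nonempty Q := ⟨P₁⟩
  have hmerge : ∀ S₁ S₂ : Q, S₁ ≠ S₂ → ∃ u : List (Q → Q),
      (∀ f ∈ u, f ∈ ({a, b, c} : Set (Q → Q))) ∧ u.length ≤ L + 1 ∧
      wordAction u S₁ = wordAction u S₂ := by
    intro S₁ S₂ hne
    obtain ⟨v, hv, hvlen, hv₁, hv₂⟩ := hmove S₁ S₂ hne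
    refine ⟨v ++ [a], fun f hf => ?_, by simpa using hvlen, ?_⟩
    · rcases List.mem_append.mp hf with hf | hf
      · simpa using Or.inr (hv f hf)
      · simp_all
    · simp only [wordAction_append, hv₁, hv₂]
      exact ha
  have hpow : (Set.range (wordAction (List.replicate h a))).ncard ≤ m - 1 + 1 := by
    rw [wordAction_replicate]
    omega
  obtain ⟨w, hw, hlen, hsync⟩ := exists_isSyncWord_of_pairwise_mergeable hmerge (m - 1)
    (fun f hf => by simp [List.eq_of_mem_replicate hf]) hpow
  exact ⟨w, fun f hf => by simpa using hw f hf, by simpa using hlen, hsync⟩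

/-- Let `Q` be a finite set with `|Q| = n ≥ 2` and `a, b, c : Q → Q` with `b, c`
bijective. Suppose `h, m, L : ℕ` with `m ≥ 1` satisfy: (i) the image of `a^[h]` has
at most `m` elements; (ii) there are distinct states `P₁ ≠ P₂` merged by `a`, such
that (iii) every ordered pair of distinct states can be mapped to `(P₁, P₂)` by a
word over the letters `b, c` of length at most `L`. Then the automaton with alphabet
`{a, b, c}` is synchronizing with a synchronizing word of length at most
`h + (m - 1) * (L + 1)`. -/
theorem synchronization_from_merging_pair
    (Q : Type*) [Fintype Q] (n : ℕ) (hcard : Nat.card Q = n) (hn : 2 ≤ n)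
    (a b c : Q → Q) (hb : Function.Bijective b) (hc : Function.Bijective c)
    (h m L : ℕ) (hm : 1 ≤ m)
    (himg : (Set.range (a^[h])).ncard ≤ m)
    (hpair : ∃ P₁ P₂ : Q, P₁ ≠ P₂ ∧ a P₁ = a P₂ ∧
      ∀ S₁ S₂ : Q, S₁ ≠ S₂ →
        ∃ w : List (Q → Q), (∀ f ∈ w, f = b ∨ f = c) ∧ w.length ≤ L ∧
          wordAction w S₁ = P₁ ∧ wordAction w S₂ = P₂) :
    ∃ w : List (Q → Q), (∀ f ∈ w, f = a ∨ f = b ∨ f = c) ∧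
      w.length ≤ h + (m - 1) * (L + 1) ∧ IsSyncWord w :=
  synchronization_from_merging_pair_general Q a b c h m L himg hpair
end
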